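/- A reflexible map M is face-bipartite if and only if it is face-reflexible. -/

import Mathlib

/-- Two flags lie in the same face iff some element of `⟨r₀, r₁⟩` maps one to the other. -/
def SameFace {Ω : Type} (r0 r1 : Equiv.Perm Ω) (x y : Ω) : Prop :=
  ∃ h ∈ Subgroup.closure ({r0, r1} : Set (Equiv.Perm Ω)), h x = y

/-- A permutation of the flags is a symmetry of the map iff it commutes with the three
adjacency involutions. -/
def IsMapSym {Ω : Type} (r0 r1 r2 : Equiv.Perm Ω) (g : Equiv.Perm Ω) : Prop :=
  g * r0 = r0 * g ∧ g * r1 = r1 * g ∧ g * r2 = r2 * g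

/-!
A symmetry of a connected map commutes with `r₀, r₁, r₂`, so it either preserves or swaps the two
colour classes of a proper face colouring, and which of the two happens is decided at a single
flag. Hence the colour-preserving symmetries of a reflexible face-bipartite map are transitive on
the flags of each face but never map a flag `x` to `r₂ x`.

Conversely, the orbits of a half-reflexible `G` are unions of faces and are permuted by `r₂`, which
commutes with `G`. By connectivity every flag lies in the orbit `O` of a fixed flag or in `r₂ O`;
as `G` is not transitive these are distinct orbits, and membership in `O` is a proper colouring.
-/

open Equiv MulAction

theorem MulAction.mem_orbit_iff_of_mem_orbit {G α : Type*} [Group G] [MulAction G α] {x y z : α}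
    (h : y ∈ orbit G z) : y ∈ orbit G x ↔ z ∈ orbit G x := by
  rw [mem_orbit_symm, orbit_eq_iff.mpr h, mem_orbit_symm]

theorem Equiv.Perm.mem_orbit_subgroup_iff {Ω : Type*} {G : Subgroup (Perm Ω)} {x y : Ω} :
    y ∈ orbit G x ↔ ∃ g ∈ G, g x = y := by
  simp [MulAction.mem_orbit_iff, Subgroup.smul_def]

theorem Equiv.Perm.apply_mem_orbit_apply {Ω : Type*} {G : Subgroup (Perm Ω)} {s : Perm Ω}
    (hs : ∀ g ∈ G, g * s = s * g) {x y : Ω} (h : y ∈ orbit G x) : s y ∈ orbit G (s x) := by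
  obtain ⟨g, hg, rfl⟩ := mem_orbit_subgroup_iff.mp h
  exact mem_orbit_subgroup_iff.mpr ⟨g, hg, DFunLike.congr_fun (hs g hg) x⟩

theorem Equiv.Perm.apply_iff_of_mem_closure {Ω : Type*} {S : Set (Perm Ω)} {p : Ω → Prop}
    (hS : ∀ s ∈ S, ∀ z, p (s z) ↔ p z) {w : Perm Ω} (hw : w ∈ Subgroup.closure S) (z : Ω) :
    p (w z) ↔ p z := by
  induction hw using Subgroup.closure_induction generalizing z with
  | mem s hs => exact hS s hs z
  | one => rfl
  | mul a b _ _ ha hb => exact (ha (b z)).trans (hb z)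
  | inv a _ ha => simpa using (ha (a⁻¹ z)).symm

def colorPreserving {Ω α : Type*} (c : Ω → α) : Subgroup (Perm Ω) where
  carrier := {g | ∀ z, c (g z) = c z}
  one_mem' _ := rfl
  mul_mem' ha hb z := (ha _).trans (hb z)
  inv_mem' {g} hg z := by simpa using (hg (g⁻¹ z)).symm

section Map

variable {Ω : Type} {r0 r1 r2 : Perm Ω}

theorem forall_of_flag_invariant
    (hconn : ∀ x y : Ω, ∃ g ∈ Subgroup.closure ({r0, r1, r2} : Set (Perm Ω)), g x = y)
    {p : Ω → Prop} (hp0 : ∀ z, p (r0 z) ↔ p z) (hp1 : ∀ z, p (r1 z) ↔ p z)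
    (hp2 : ∀ z, p (r2 z) ↔ p z) {x : Ω} (hx : p x) (y : Ω) : p y := by
  obtain ⟨w, hw, rfl⟩ := hconn x y
  exact (Perm.apply_iff_of_mem_closure (by rintro s (rfl | rfl | rfl) <;> assumption) hw x).mpr hx

theorem sameFace_r0 (x : Ω) : SameFace r0 r1 x (r0 x) :=
  ⟨r0, Subgroup.subset_closure (by simp), rfl⟩

theorem sameFace_r1 (x : Ω) : SameFace r0 r1 x (r1 x) :=
  ⟨r1, Subgroup.subset_closure (by simp), rfl⟩

theorem isMapSym_iff_mem_centralizer {g : Perm Ω} :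
    IsMapSym r0 r1 r2 g ↔ g ∈ Subgroup.centralizer {r0, r1, r2} := by
  simp only [IsMapSym, Subgroup.mem_centralizer_iff, Set.mem_insert_iff, Set.mem_singleton_iff,
    forall_eq_or_imp, forall_eq]
  exact ⟨fun ⟨h0, h1, h2⟩ => ⟨h0.symm, h1.symm, h2.symm⟩,
    fun ⟨h0, h1, h2⟩ => ⟨h0.symm, h1.symm, h2.symm⟩⟩

namespace IsMapSym

variable {g : Perm Ω} (hg : IsMapSym r0 r1 r2 g) (z : Ω)
include hg

theorem apply_r0 : g (r0 z) = r0 (g z) := DFunLike.congr_fun hg.1 z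

theorem apply_r1 : g (r1 z) = r1 (g z) := DFunLike.congr_fun hg.2.1 z

theorem apply_r2 : g (r2 z) = r2 (g z) := DFunLike.congr_fun hg.2.2 z

end IsMapSym

variable (r0 r1 r2) in
def IsFaceColoring (c : Ω → Bool) : Prop :=
  (∀ x y : Ω, SameFace r0 r1 x y → c x = c y) ∧ ∀ x : Ω, c (r2 x) ≠ c x

variable (r0 r1 r2) in
def IsHalfReflexible (G : Subgroup (Perm Ω)) : Prop :=
  (∀ g ∈ G, IsMapSym r0 r1 r2 g) ∧ (¬ ∀ x y : Ω, ∃ g ∈ G, g x = y) ∧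
    ∀ x y : Ω, SameFace r0 r1 x y → ∃ g ∈ G, g x = y

namespace IsFaceColoring

variable {c : Ω → Bool} (hc : IsFaceColoring r0 r1 r2 c)
include hc

theorem apply_r0 (z : Ω) : c (r0 z) = c z := (hc.1 _ _ (sameFace_r0 z)).symm

theorem apply_r1 (z : Ω) : c (r1 z) = c z := (hc.1 _ _ (sameFace_r1 z)).symm

theorem apply_r2 (z : Ω) : c (r2 z) = !c z := Bool.eq_not_iff.mpr (hc.2 z)

theorem mem_colorPreserving
    (hconn : ∀ x y : Ω, ∃ g ∈ Subgroup.closure ({r0, r1, r2} : Set (Perm Ω)), g x = y)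
    {g : Perm Ω} (hg : IsMapSym r0 r1 r2 g) {x : Ω} (hx : c (g x) = c x) :
    g ∈ colorPreserving c :=
  forall_of_flag_invariant hconn (p := fun z => c (g z) = c z)
    (fun z => by rw [hg.apply_r0, hc.apply_r0, hc.apply_r0])
    (fun z => by rw [hg.apply_r1, hc.apply_r1, hc.apply_r1])
    (fun z => by rw [hg.apply_r2, hc.apply_r2, hc.apply_r2, Bool.not_inj_iff]) hx

theorem isHalfReflexible [Nonempty Ω]
    (hconn : ∀ x y : Ω, ∃ g ∈ Subgroup.closure ({r0, r1, r2} : Set (Perm Ω)), g x = y)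
    (hreflex : ∀ x y : Ω, ∃ g : Perm Ω, IsMapSym r0 r1 r2 g ∧ g x = y) :
    IsHalfReflexible r0 r1 r2 (Subgroup.centralizer {r0, r1, r2} ⊓ colorPreserving c) := by
  refine ⟨fun g hg => isMapSym_iff_mem_centralizer.mpr hg.1, fun htrans => ?_, ?_⟩
  · obtain ⟨x⟩ := ‹Nonempty Ω›
    obtain ⟨g, hg, hgx⟩ := htrans x (r2 x)
    exact hc.2 x (hgx ▸ hg.2 x)
  · intro x y hxy
    obtain ⟨g, hg, rfl⟩ := hreflex x y
    exact ⟨g, ⟨isMapSym_iff_mem_centralizer.mp hg,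
      hc.mem_colorPreserving hconn hg (hc.1 x _ hxy).symm⟩, rfl⟩

end IsFaceColoring

namespace IsHalfReflexible

variable {G : Subgroup (Perm Ω)} (hG : IsHalfReflexible r0 r1 r2 G)
include hG

theorem mem_orbit_of_sameFace {x y : Ω} (h : SameFace r0 r1 x y) : y ∈ orbit G x :=
  Perm.mem_orbit_subgroup_iff.mpr (hG.2.2 x y h)

theorem r2_mem_orbit_r2 {x y : Ω} (h : y ∈ orbit G x) : r2 y ∈ orbit G (r2 x) :=
  Perm.apply_mem_orbit_apply (fun g hg => (hG.1 g hg).2.2) h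

theorem mem_orbit_or_r2_mem_orbit_iff_of_sameFace {s : Perm Ω} (hs : ∀ z, SameFace r0 r1 z (s z))
    (x z : Ω) :
    (s z ∈ orbit G x ∨ r2 (s z) ∈ orbit G x) ↔ (z ∈ orbit G x ∨ r2 z ∈ orbit G x) := by
  have h := hG.mem_orbit_of_sameFace (hs z)
  rw [mem_orbit_iff_of_mem_orbit h, mem_orbit_iff_of_mem_orbit (hG.r2_mem_orbit_r2 h)]

variable (hconn : ∀ x y : Ω, ∃ g ∈ Subgroup.closure ({r0, r1, r2} : Set (Perm Ω)), g x = y)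
  (h2 : r2 * r2 = 1)
include hconn h2

theorem mem_orbit_or_r2_mem_orbit (x y : Ω) : y ∈ orbit G x ∨ r2 y ∈ orbit G x := by
  refine forall_of_flag_invariant hconn (p := fun z => z ∈ orbit G x ∨ r2 z ∈ orbit G x)
    (hG.mem_orbit_or_r2_mem_orbit_iff_of_sameFace sameFace_r0 x)
    (hG.mem_orbit_or_r2_mem_orbit_iff_of_sameFace sameFace_r1 x) (fun z => ?_)
    (.inl (mem_orbit_self x)) y
  rw [show r2 (r2 z) = z from DFunLike.congr_fun h2 z, or_comm]

theorem r2_not_mem_orbit (x : Ω) : r2 x ∉ orbit G x := by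
  intro hx
  have hall : ∀ y, y ∈ orbit G x := fun y =>
    (hG.mem_orbit_or_r2_mem_orbit hconn h2 x y).elim id fun hy => by
      have := hG.r2_mem_orbit_r2 hy
      rwa [show r2 (r2 y) = y from DFunLike.congr_fun h2 y, orbit_eq_iff.mpr hx] at this
  exact hG.2.1 fun y z => Perm.mem_orbit_subgroup_iff.mp <|
    (mem_orbit_iff_of_mem_orbit (hall z)).mpr (mem_orbit_symm.mp (hall y))

theorem r2_mem_orbit_iff (x y : Ω) : r2 y ∈ orbit G x ↔ y ∉ orbit G x := by
  refine ⟨fun hr2y hy => hG.r2_not_mem_orbit hconn h2 y ?_,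
    (hG.mem_orbit_or_r2_mem_orbit hconn h2 x y).resolve_left⟩
  rwa [orbit_eq_iff.mpr hy]

open scoped Classical in
theorem isFaceColoring_mem_orbit (x₀ : Ω) :
    IsFaceColoring r0 r1 r2 fun x => decide (x ∈ orbit G x₀) := by
  refine ⟨fun x y hxy => ?_, fun x => ?_⟩
  · simpa using (mem_orbit_iff_of_mem_orbit (hG.mem_orbit_of_sameFace hxy)).symm
  · simp only [hG.r2_mem_orbit_iff hconn h2, decide_not]
    exact Bool.not_ne_self _

end IsHalfReflexible

end Map

theorem reflexible_face_bipartite_iff_face_reflexible_general {Ω : Type} [Nonempty Ω]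
    (r0 r1 r2 : Equiv.Perm Ω)
    (h2 : r2 * r2 = 1)
    (hconn : ∀ x y : Ω, ∃ g ∈ Subgroup.closure ({r0, r1, r2} : Set (Equiv.Perm Ω)), g x = y)
    (hreflex : ∀ x y : Ω, ∃ g : Equiv.Perm Ω, IsMapSym r0 r1 r2 g ∧ g x = y) :
    (∃ c : Ω → Bool,
        (∀ x y : Ω, SameFace r0 r1 x y → c x = c y) ∧
        (∀ x : Ω, c (r2 x) ≠ c x)) ↔
    (∃ G : Subgroup (Equiv.Perm Ω),
        (∀ g ∈ G, IsMapSym r0 r1 r2 g) ∧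
        (¬ ∀ x y : Ω, ∃ g ∈ G, g x = y) ∧
        (∀ x y : Ω, SameFace r0 r1 x y → ∃ g ∈ G, g x = y)) := by
  constructor
  · rintro ⟨c, hc⟩
    exact ⟨_, IsFaceColoring.isHalfReflexible hc hconn hreflex⟩
  · rintro ⟨G, hG⟩
    obtain ⟨x₀⟩ := ‹Nonempty Ω›
    exact ⟨_, IsHalfReflexible.isFaceColoring_mem_orbit hG hconn h2 x₀⟩

/-- A reflexible map (the full symmetry group is transitive on flags) is
face-bipartite — its faces admit a proper 2-coloring (a `Bool`-coloring of flags
constant on faces, with faces across an edge `r₂` differently colored) — if and only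
if it is face-reflexible, i.e. it admits a half-reflexible subgroup `G` of symmetries:
`G` is not transitive on flags, but for each face its stabilizer in `G` is transitive
on the flags of that face. -/
theorem reflexible_face_bipartite_iff_face_reflexible {Ω : Type} [Fintype Ω] [Nonempty Ω]
    (r0 r1 r2 : Equiv.Perm Ω)
    (h0 : r0 * r0 = 1) (h1 : r1 * r1 = 1) (h2 : r2 * r2 = 1)
    (h02 : r0 * r2 = r2 * r0)
    (hconn : ∀ x y : Ω, ∃ g ∈ Subgroup.closure ({r0, r1, r2} : Set (Equiv.Perm Ω)), g x = y)
    (hreflex : ∀ x y : Ω, ∃ g : Equiv.Perm Ω, IsMapSym r0 r1 r2 g ∧ g x = y) :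
    (∃ c : Ω → Bool,
        (∀ x y : Ω, SameFace r0 r1 x y → c x = c y) ∧
        (∀ x : Ω, c (r2 x) ≠ c x)) ↔
    (∃ G : Subgroup (Equiv.Perm Ω),
        (∀ g ∈ G, IsMapSym r0 r1 r2 g) ∧
        (¬ ∀ x y : Ω, ∃ g ∈ G, g x = y) ∧
        (∀ x y : Ω, SameFace r0 r1 x y → ∃ g ∈ G, g x = y)) :=
  reflexible_face_bipartite_iff_face_reflexible_general r0 r1 r2 h2 hconn hreflex
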